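/- arXiv:0904.1614 — 4 statements merged into one kernel-verified Lean document; each statement's English description precedes it below -/
import Mathlib

section
/- For Lebesgue almost every m×n real matrix Y, the Diophantine exponent ω(Y) equals n/m. -/
/-!
Dirichlet's pigeonhole principle, applied to the fractional parts of `Y q` for `q ∈ {0, …, N}ⁿ`,
gives for every `v < n / m` approximants `q` with `‖Y q - p‖ < ‖q‖^(-v)` and `Y q` arbitrarily
close to `ℤᵐ`, hence infinitely many of them, for every `Y`. Conversely, the rows `y` in a unit
cube with `y ⬝ q` within `ε` of `ℤ` have measure `≤ 10 ε` (Fubini along a coordinate with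
`q_j ≠ 0`), so the matrices in a unit cube approximated by a fixed `q` with exponent `v` have
measure `≪ ‖q‖^(-v m)`. For `v > n / m` this is summable over `q ∈ ℤⁿ`, and Borel–Cantelli shows
that almost every `Y` has only finitely many such approximants.
-/

open Matrix MeasureTheory

/-- The Diophantine exponent of an `m × n` matrix `Y` (supremum norms):
the supremum of `v > 0` such that `dist(Yq, ℤ^m) < ‖q‖^{-v}` for infinitely many
nonzero `q ∈ ℤ^n`. -/
noncomputable def omegaSup (m n : ℕ) (Y : Matrix (Fin m) (Fin n) ℝ) : ℝ :=
  sSup {v : ℝ | 0 < v ∧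
    {q : Fin n → ℤ | q ≠ 0 ∧ ∃ p : Fin m → ℤ,
      ‖Y.mulVec (fun j => (q j : ℝ)) - fun i => (p i : ℝ)‖ <
        ‖((fun j => (q j : ℝ)) : Fin n → ℝ)‖ ^ (-v)}.Infinite}

open Set Filter
open scoped ENNReal

namespace OmegaExponent

variable {ι : Type*} {m n : ℕ}

/-- `omegaSup m n Y` unfolds to `sSup {v | 0 < v ∧ (approximants Y v).Infinite}`. -/
def approximants (Y : Matrix (Fin m) (Fin n) ℝ) (v : ℝ) : Set (Fin n → ℤ) :=
  {q | q ≠ 0 ∧ ∃ p : Fin m → ℤ,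
    ‖Y *ᵥ (fun j => (q j : ℝ)) - fun i => (p i : ℝ)‖ < ‖fun j => (q j : ℝ)‖ ^ (-v)}

lemma one_le_norm_intCast [Fintype ι] {q : ι → ℤ} (hq : q ≠ 0) :
    1 ≤ ‖fun j => (q j : ℝ)‖ := by
  obtain ⟨j, hj⟩ := Function.ne_iff.1 hq
  calc (1 : ℝ) ≤ |(q j : ℝ)| := by exact_mod_cast Int.one_le_abs hj
    _ ≤ ‖fun j => (q j : ℝ)‖ := norm_le_pi_norm (fun j => (q j : ℝ)) j

lemma approximants_anti (Y : Matrix (Fin m) (Fin n) ℝ) {v w : ℝ} (hvw : v ≤ w) :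
    approximants Y w ⊆ approximants Y v := by
  rintro q ⟨hq, p, hp⟩
  exact ⟨hq, p, hp.trans_le
    (Real.rpow_le_rpow_of_exponent_le (one_le_norm_intCast hq) (neg_le_neg hvw))⟩

lemma exists_norm_le_norm_mulVec_sub_lt (Y : Matrix (Fin m) (Fin n) ℝ) {N Q : ℕ} (hQ : 0 < Q)
    (hcard : Q ^ m < (N + 1) ^ n) :
    ∃ q : Fin n → ℤ, q ≠ 0 ∧ ‖fun j => (q j : ℝ)‖ ≤ N ∧ ∃ p : Fin m → ℤ,
      ‖Y *ᵥ (fun j => (q j : ℝ)) - fun i => (p i : ℝ)‖ < 1 / Q := by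
  have hQ' : (0 : ℝ) < Q := by exact_mod_cast hQ
  -- `box q` is the index of the subcube of side `1 / Q` of `[0, 1)ᵐ` containing `fract (Y q)`.
  let box (q : Fin n → ℤ) (i : Fin m) : ℤ := ⌊Q * Int.fract ((Y *ᵥ fun j => (q j : ℝ)) i)⌋
  have hmaps : MapsTo box ↑(Fintype.piFinset fun _ : Fin n => Finset.Icc (0 : ℤ) N)
      ↑(Fintype.piFinset fun _ : Fin m => Finset.Ico (0 : ℤ) Q) := by
    intro q _
    simp only [Finset.mem_coe, Fintype.mem_piFinset, Finset.mem_Ico]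
    intro i
    refine ⟨Int.floor_nonneg.2 (by positivity), Int.floor_lt.2 ?_⟩
    push_cast
    nlinarith [Int.fract_lt_one ((Y *ᵥ fun j => (q j : ℝ)) i)]
  obtain ⟨a, ha, b, hb, hab, hbox⟩ := Finset.exists_ne_map_eq_of_card_lt_of_maps_to
    (by simpa [Fintype.card_piFinset] using hcard) hmaps
  simp only [Fintype.mem_piFinset, Finset.mem_Icc] at ha hb
  let x (q : Fin n → ℤ) := Y *ᵥ fun j => (q j : ℝ)
  refine ⟨a - b, sub_ne_zero.2 hab, ?_, fun i => ⌊x a i⌋ - ⌊x b i⌋, ?_⟩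
  · refine pi_norm_le_iff_of_nonneg (by positivity) |>.2 fun j => ?_
    simp only [Pi.sub_apply, Int.cast_sub, Real.norm_eq_abs, abs_le]
    have := ha j; have := hb j
    constructor <;> norm_cast <;> omega
  · refine (pi_norm_lt_iff (by positivity)).2 fun i => ?_
    have hfract : |Int.fract (x a i) - Int.fract (x b i)| < 1 / Q := by
      have h := Int.abs_sub_lt_one_of_floor_eq_floor (congrFun hbox i)
      rwa [← mul_sub, abs_mul, abs_of_pos hQ', ← lt_div_iff₀' hQ'] at h
    have hx : Y *ᵥ (fun j => ((a - b) j : ℝ)) = x a - x b := by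
      rw [← mulVec_sub]; congr 1; ext j; simp
    rw [hx, Real.norm_eq_abs]
    convert hfract using 2
    simp only [Pi.sub_apply, Int.fract]
    push_cast
    ring

lemma exists_mem_approximants_norm_sub_lt (Y : Matrix (Fin m) (Fin n) ℝ) {v : ℝ} (hv0 : 0 < v)
    (hv : v < n / m) {δ : ℝ} (hδ : 0 < δ) :
    ∃ q ∈ approximants Y v, ∃ p : Fin m → ℤ,
      ‖Y *ᵥ (fun j => (q j : ℝ)) - fun i => (p i : ℝ)‖ < δ := by
  have hm : 0 < m := Nat.pos_of_ne_zero fun h => by simp [h] at hv; linarith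
  have hmv : m * v < n := by rwa [lt_div_iff₀ (by positivity), mul_comm] at hv
  have hn : n ≠ 0 := by rintro rfl; simp at hmv; nlinarith
  obtain ⟨k, hk⟩ := exists_nat_one_div_lt hδ
  set K : ℕ := k + 1 with hK
  have hK1 : (1 : ℝ) ≤ K := by simp [hK]
  -- Dirichlet's choice `N = Kᵐ`, `Q = Kⁿ`, for which `Qᵐ = Nⁿ < (N + 1)ⁿ`.
  have hcard : (K ^ n) ^ m < (K ^ m + 1) ^ n := by
    rw [← pow_mul, mul_comm, pow_mul]
    exact Nat.pow_lt_pow_left (Nat.lt_succ_self _) hn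
  obtain ⟨q, hq, hqN, p, hp⟩ := exists_norm_le_norm_mulVec_sub_lt Y (by positivity) hcard
  have hKn : 1 / ((K ^ n : ℕ) : ℝ) ≤ ‖fun j => (q j : ℝ)‖ ^ (-v) :=
    calc 1 / ((K ^ n : ℕ) : ℝ) = (K : ℝ) ^ (-(n : ℝ)) := by
          rw [Real.rpow_neg (by positivity), Real.rpow_natCast, one_div]; push_cast; rfl
      _ ≤ (K : ℝ) ^ (-(m * v)) := Real.rpow_le_rpow_of_exponent_le hK1 (by linarith)
      _ = ((K ^ m : ℕ) : ℝ) ^ (-v) := by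
          rw [Nat.cast_pow, ← Real.rpow_natCast, ← Real.rpow_mul (by positivity)]; ring_nf
      _ ≤ ‖fun j => (q j : ℝ)‖ ^ (-v) :=
          Real.rpow_le_rpow_of_nonpos (by linarith [one_le_norm_intCast hq]) hqN (by linarith)
  have hKδ : 1 / ((K ^ n : ℕ) : ℝ) < δ := by
    refine lt_of_le_of_lt ?_ hk
    rw [Nat.cast_pow]
    gcongr
    exact_mod_cast le_self_pow₀ hK1 hn
  exact ⟨q, ⟨hq, p, hp.trans_le hKn⟩, p, hp.trans hKδ⟩

lemma approximants_infinite_of_mulVec_eq (Y : Matrix (Fin m) (Fin n) ℝ) (v : ℝ)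
    {q : Fin n → ℤ} (hq : q ≠ 0) {p : Fin m → ℤ}
    (hp : Y *ᵥ (fun j => (q j : ℝ)) = fun i => (p i : ℝ)) : (approximants Y v).Infinite := by
  have hinj : Function.Injective fun k : ℕ => ((k : ℤ) + 1) • q :=
    (smul_left_injective ℤ hq).comp fun a b h => by simpa using h
  refine infinite_of_injective_forall_mem hinj fun k => ?_
  have hc : (k : ℤ) + 1 ≠ 0 := by omega
  have hcq : ((k : ℤ) + 1) • q ≠ 0 := smul_ne_zero hc hq
  refine ⟨hcq, ((k : ℤ) + 1) • p, ?_⟩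
  have hmul : Y *ᵥ (fun j => ((((k : ℤ) + 1) • q) j : ℝ)) =
      fun i => ((((k : ℤ) + 1) • p) i : ℝ) := by
    have : (fun j => ((((k : ℤ) + 1) • q) j : ℝ)) = ((k : ℝ) + 1) • fun j => (q j : ℝ) := by
      ext j; simp
    rw [this, mulVec_smul, hp]
    ext i; simp
  rw [hmul, sub_self, norm_zero]
  exact Real.rpow_pos_of_pos (by linarith [one_le_norm_intCast hcq]) _

lemma norm_sub_round_le [Fintype ι] (x : ι → ℝ) (p : ι → ℤ) :
    ‖x - fun i => (round (x i) : ℝ)‖ ≤ ‖x - fun i => (p i : ℝ)‖ :=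
  pi_norm_le_iff_of_nonneg (norm_nonneg _) |>.2 fun i =>
    (round_le (x i) (p i)).trans (norm_le_pi_norm (x - fun i => (p i : ℝ)) i)

lemma approximants_infinite (Y : Matrix (Fin m) (Fin n) ℝ) {v : ℝ} (hv0 : 0 < v)
    (hv : v < n / m) : (approximants Y v).Infinite := by
  intro hfin
  -- Among finitely many approximants, one, `q₀`, has `Y q₀` closest to `ℤᵐ`. If `Y q₀ ∈ ℤᵐ`, the
  -- multiples of `q₀` are approximants too; otherwise Dirichlet finds one closer still.
  let d (q : Fin n → ℤ) : ℝ :=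
    ‖Y *ᵥ (fun j => (q j : ℝ)) - fun i => (round ((Y *ᵥ fun j => (q j : ℝ)) i) : ℝ)‖
  obtain ⟨q, hq, -⟩ := exists_mem_approximants_norm_sub_lt Y hv0 hv one_pos
  obtain ⟨q₀, hq₀, hmin⟩ := exists_min_image _ d hfin ⟨q, hq⟩
  rcases (norm_nonneg _ : 0 ≤ d q₀).eq_or_lt with h0 | hpos
  · exact approximants_infinite_of_mulVec_eq Y v hq₀.1
      (sub_eq_zero.1 (norm_eq_zero.1 h0.symm)) hfin
  · obtain ⟨q, hq, p, hp⟩ := exists_mem_approximants_norm_sub_lt Y hv0 hv hpos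
    exact (hmin q hq).not_gt ((norm_sub_round_le _ p).trans_lt hp)

def nearInt (ε : ℝ) : Set ℝ := ⋃ p : ℤ, Metric.ball (p : ℝ) ε

lemma isOpen_nearInt (ε : ℝ) : IsOpen (nearInt ε) :=
  isOpen_iUnion fun _ => Metric.isOpen_ball

lemma mem_nearInt {ε x : ℝ} : x ∈ nearInt ε ↔ ∃ p : ℤ, |x - p| < ε := by
  simp [nearInt, Real.dist_eq]

lemma preimage_nearInt_inter_Ico_subset {a : ℤ} (ha : a ≠ 0) (c t₀ : ℝ) {ε : ℝ} (hε : ε ≤ 1) :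
    (fun t => t * a + c) ⁻¹' nearInt ε ∩ Ico t₀ (t₀ + 1) ⊆
      ⋃ p ∈ Finset.Icc (⌊t₀ * a + c⌋ - |a| - 1) (⌊t₀ * a + c⌋ + |a| + 1),
        Metric.ball ((p - c) / a) (ε / |(a : ℝ)|) := by
  rintro t ⟨ht, ht₀, ht₁⟩
  obtain ⟨p, hp⟩ := mem_nearInt.1 ht
  set r := t₀ * a + c
  have hpr : |p - r| < |(a : ℝ)| + 1 :=
    calc |p - r| = |(t - t₀) * a - (t * a + c - p)| := by congr 1; ring
      _ ≤ |t - t₀| * |(a : ℝ)| + |t * a + c - p| := by rw [← abs_mul]; exact abs_sub _ _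
      _ < |(a : ℝ)| + 1 := by
          have : |t - t₀| ≤ 1 := abs_le.2 ⟨by linarith, by linarith⟩
          nlinarith [abs_nonneg (a : ℝ)]
  have hpF : ⌊r⌋ - |a| - 1 ≤ p ∧ p ≤ ⌊r⌋ + |a| + 1 := by
    rw [abs_lt] at hpr
    have : ((|a| : ℤ) : ℝ) = |(a : ℝ)| := Int.cast_abs
    have h₁ : ⌊r⌋ - |a| - 1 < p + 1 := by
      exact_mod_cast (by linarith [Int.floor_le r] : (⌊r⌋ : ℝ) - |(a : ℝ)| - 1 < p + 1)
    have h₂ : p < ⌊r⌋ + |a| + 1 + 1 := by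
      exact_mod_cast (by linarith [Int.lt_floor_add_one r] : (p : ℝ) < ⌊r⌋ + |(a : ℝ)| + 1 + 1)
    omega
  refine mem_biUnion (Finset.mem_Icc.2 hpF) ?_
  have ha₀ : (a : ℝ) ≠ 0 := by exact_mod_cast ha
  have : (t - (p - c) / a) * a = t * a + c - p := by field_simp; ring
  rwa [Metric.mem_ball, Real.dist_eq, lt_div_iff₀ (abs_pos.2 ha₀), ← abs_mul, this]

lemma volume_preimage_nearInt_inter_Ico_le {a : ℤ} (ha : a ≠ 0) (c t₀ : ℝ) {ε : ℝ} (hε : 0 ≤ ε) :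
    volume ((fun t => t * a + c) ⁻¹' nearInt ε ∩ Ico t₀ (t₀ + 1)) ≤ ENNReal.ofReal (10 * ε) := by
  rcases le_or_gt 1 ε with hε₁ | hε₁
  · calc _ ≤ volume (Ico t₀ (t₀ + 1)) := measure_mono inter_subset_right
      _ = 1 := by simp
      _ ≤ ENNReal.ofReal (10 * ε) := ENNReal.one_le_ofReal.2 (by linarith)
  set F := Finset.Icc (⌊t₀ * a + c⌋ - |a| - 1) (⌊t₀ * a + c⌋ + |a| + 1)
  have ha₁ : (1 : ℝ) ≤ |(a : ℝ)| := by exact_mod_cast Int.one_le_abs ha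
  have hcard : (F.card : ℝ) ≤ 5 * |(a : ℝ)| := by
    have : (F.card : ℤ) = 2 * |a| + 3 := by
      simp only [F, Int.card_Icc]; have := abs_nonneg a; omega
    have : (F.card : ℝ) = 2 * |(a : ℝ)| + 3 := by exact_mod_cast this
    linarith
  calc _ ≤ volume (⋃ p ∈ F, Metric.ball (((p : ℝ) - c) / a) (ε / |(a : ℝ)|)) :=
        measure_mono (preimage_nearInt_inter_Ico_subset ha c t₀ hε₁.le)
    _ ≤ ∑ p ∈ F, volume (Metric.ball (((p : ℝ) - c) / a) (ε / |(a : ℝ)|)) :=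
        measure_biUnion_finset_le F _
    _ = ENNReal.ofReal (F.card * (2 * (ε / |(a : ℝ)|))) := by
        simp [Real.volume_ball, ENNReal.ofReal_mul]
    _ ≤ ENNReal.ofReal (5 * |(a : ℝ)| * (2 * (ε / |(a : ℝ)|))) := by gcongr
    _ = ENNReal.ofReal (10 * ε) := by congr 1; field_simp; ring

def unitCube (w : ι → ℤ) : Set (ι → ℝ) := univ.pi fun j => Ico (w j : ℝ) (w j + 1)

lemma measurableSet_unitCube [Countable ι] (w : ι → ℤ) : MeasurableSet (unitCube w) :=
  MeasurableSet.univ_pi fun _ => measurableSet_Ico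

lemma volume_unitCube [Fintype ι] (w : ι → ℤ) : volume (unitCube w) = 1 := by
  simp [unitCube, volume_pi_pi]

lemma iUnion_unitCube : ⋃ w : ι → ℤ, unitCube w = univ := by
  refine eq_univ_of_forall fun y => mem_iUnion.2 ⟨fun j => ⌊y j⌋, fun j _ => ?_⟩
  exact ⟨Int.floor_le _, Int.lt_floor_add_one _⟩

lemma prod_apply_le_mul_of_measure_fiber_le {α β : Type*} [MeasurableSpace α] [MeasurableSpace β]
    {μ : Measure α} {ν : Measure β} [SFinite μ] [SFinite ν] {s : Set (α × β)}
    (hs : MeasurableSet s) {B : Set β} (hsB : ∀ x ∈ s, x.2 ∈ B) {δ : ℝ≥0∞}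
    (hδ : ∀ y ∈ B, μ ((·, y) ⁻¹' s) ≤ δ) : μ.prod ν s ≤ δ * ν B := by
  rw [Measure.prod_apply_symm hs, ← setLIntegral_const]
  calc ∫⁻ y, μ ((·, y) ⁻¹' s) ∂ν = ∫⁻ y in B, μ ((·, y) ⁻¹' s) ∂ν := by
        refine (setLIntegral_eq_of_support_subset fun y hy => ?_).symm
        by_contra hyB
        exact hy (measure_eq_zero_iff_ae_notMem.2 (ae_of_all _ fun x hx => hyB (hsB _ hx)))
    _ ≤ ∫⁻ _ in B, δ ∂ν := setLIntegral_mono measurable_const hδ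

lemma volume_unitCube_inter_preimage_nearInt_le (w : Fin n → ℤ) {q : Fin n → ℤ}
    (hq : q ≠ 0) {ε : ℝ} (hε : 0 ≤ ε) :
    volume (unitCube w ∩ (fun y => y ⬝ᵥ fun j => (q j : ℝ)) ⁻¹' nearInt ε) ≤
      ENNReal.ofReal (10 * ε) := by
  obtain ⟨j₀, hj₀⟩ : ∃ j, q j ≠ 0 := Function.ne_iff.1 hq
  obtain ⟨k, rfl⟩ : ∃ k, n = k + 1 := Nat.exists_eq_succ_of_ne_zero (Fin.pos j₀).ne'
  have hS : MeasurableSet (unitCube w ∩ (fun y => y ⬝ᵥ fun j => (q j : ℝ)) ⁻¹' nearInt ε) :=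
    (measurableSet_unitCube w).inter
      ((isOpen_nearInt ε).preimage (by fun_prop)).measurableSet
  -- Fubini along the coordinate `j₀`, where the fibres are handled by the one-dimensional bound.
  have he := (volume_preserving_piFinSuccAbove (fun _ : Fin (k + 1) => ℝ) j₀).symm
  rw [← he.measure_preimage hS.nullMeasurableSet]
  calc _ ≤ ENNReal.ofReal (10 * ε) * volume (unitCube (w ∘ j₀.succAbove)) := by
        refine prod_apply_le_mul_of_measure_fiber_le (he.measurable hS) ?_ fun y hy => ?_
        · rintro ⟨t, y⟩ ⟨hy, -⟩ j -
          simpa [MeasurableEquiv.piFinSuccAbove_symm_apply] using hy (j₀.succAbove j) trivial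
        · refine le_trans (measure_mono fun t ht => ?_)
            (volume_preimage_nearInt_inter_Ico_le hj₀ (y ⬝ᵥ fun j => (q (j₀.succAbove j) : ℝ))
              (w j₀) hε)
          obtain ⟨hcube, hnear⟩ := ht
          simp only [MeasurableEquiv.piFinSuccAbove_symm_apply, mem_preimage] at hcube hnear
          refine ⟨?_, by simpa using hcube j₀ trivial⟩
          rw [dotProduct, Fin.sum_univ_succAbove _ j₀] at hnear
          simpa [dotProduct] using hnear
    _ = ENNReal.ofReal (10 * ε) := by rw [volume_unitCube, mul_one]

lemma volume_pi_unitCube_inter_le [Fintype ι] (z : ι → Fin n → ℤ)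
    {q : Fin n → ℤ} (hq : q ≠ 0) {ε : ℝ} (hε : 0 ≤ ε) :
    volume (univ.pi (fun i => unitCube (z i)) ∩
      {Y : ι → Fin n → ℝ | ∃ p : ι → ℤ,
        ‖of Y *ᵥ (fun j => (q j : ℝ)) - fun i => (p i : ℝ)‖ < ε}) ≤
      ENNReal.ofReal (10 * ε) ^ Fintype.card ι := by
  calc _ ≤ volume (univ.pi fun i =>
        unitCube (z i) ∩ (fun y => y ⬝ᵥ fun j => (q j : ℝ)) ⁻¹' nearInt ε) := by
        refine measure_mono fun Y ⟨hY, p, hp⟩ i _ => ⟨hY i trivial, mem_nearInt.2 ⟨p i, ?_⟩⟩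
        exact (norm_le_pi_norm _ i).trans_lt hp
    _ = ∏ i, volume (unitCube (z i) ∩ (fun y => y ⬝ᵥ fun j => (q j : ℝ)) ⁻¹' nearInt ε) :=
        volume_pi_pi _
    _ ≤ ∏ _i : ι, ENNReal.ofReal (10 * ε) :=
        Finset.prod_le_prod' fun i _ => volume_unitCube_inter_preimage_nearInt_le (z i) hq hε
    _ = ENNReal.ofReal (10 * ε) ^ Fintype.card ι := Finset.prod_const _

lemma intCast_mem_span_basisFun (q : Fin n → ℤ) :
    (fun j => (q j : ℝ)) ∈ Submodule.span ℤ (range (Pi.basisFun ℝ (Fin n))) := by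
  rw [show (fun j => (q j : ℝ)) = ∑ j, q j • Pi.basisFun ℝ (Fin n) j by
    ext; simp [Pi.single_apply]]
  exact Submodule.sum_mem _ fun j _ => Submodule.smul_mem _ _ (Submodule.subset_span ⟨j, rfl⟩)

lemma summable_norm_intCast_rpow {r : ℝ} (hr : n < r) :
    Summable fun q : Fin n → ℤ => ‖fun j => (q j : ℝ)‖ ^ (-r) := by
  let L := Submodule.span ℤ (range (Pi.basisFun ℝ (Fin n)))
  have hL : Module.finrank ℤ L = n := by rw [ZLattice.rank ℝ]; simp
  have hs : Summable fun z : L => ‖z‖ ^ (-r) :=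
    ZLattice.summable_norm_rpow L (-r) (by rw [hL]; linarith)
  let i : (Fin n → ℤ) → L := fun q => ⟨_, intCast_mem_span_basisFun q⟩
  have hi : Function.Injective i := fun a b h => by
    ext j; simpa [i] using congrFun (congrArg Subtype.val h) j
  exact (hs.comp_injective hi).congr fun q => rfl

lemma ae_approximants_finite (hm : 0 < m) {v : ℝ} (hv : n / m < v) :
    ∀ᵐ Y : Fin m → Fin n → ℝ, (approximants (of Y) v).Finite := by
  have hmv : n < v * m := by rwa [div_lt_iff₀ (by positivity)] at hv
  have hv0 : 0 < v := lt_of_le_of_lt (by positivity) hv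
  have hcover : ⋃ z : Fin m → Fin n → ℤ, univ.pi (fun i => unitCube (z i)) = univ := by
    simp [iUnion_univ_pi, iUnion_unitCube]
  rw [← Measure.restrict_univ (μ := volume), ← hcover, ae_restrict_iUnion_iff]
  intro z
  have hC : MeasurableSet (univ.pi fun i => unitCube (z i)) :=
    MeasurableSet.univ_pi fun i => measurableSet_unitCube (z i)
  have hsum : ∑' q : Fin n → ℤ,
      ENNReal.ofReal ((10 : ℝ) ^ (m : ℕ) * ‖fun j => (q j : ℝ)‖ ^ (-(v * m))) ≠ ∞ := by
    rw [← ENNReal.ofReal_tsum_of_nonneg (fun _ => by positivity)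
      ((summable_norm_intCast_rpow hmv).mul_left _)]
    exact ENNReal.ofReal_ne_top
  refine ae_finite_setOfPred_mem (s := fun q => {Y | q ∈ approximants (of Y) v})
    (ne_top_of_le_ne_top hsum (ENNReal.tsum_le_tsum fun q => ?_))
  rw [Measure.restrict_apply' hC]
  by_cases hq : q = 0
  · simp [approximants, hq]
  calc _ ≤ ENNReal.ofReal (10 * ‖fun j => (q j : ℝ)‖ ^ (-v)) ^ Fintype.card (Fin m) :=
        le_trans (measure_mono <| by rintro Y ⟨⟨-, hY⟩, hYz⟩; exact ⟨hYz, hY⟩)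
          (volume_pi_unitCube_inter_le z hq (by positivity))
    _ = ENNReal.ofReal ((10 : ℝ) ^ (m : ℕ) * ‖fun j => (q j : ℝ)‖ ^ (-(v * m))) := by
        rw [Fintype.card_fin, ← ENNReal.ofReal_pow (by positivity), mul_pow,
          ← Real.rpow_natCast (‖_‖ ^ (-v)) m, ← Real.rpow_mul (norm_nonneg _), neg_mul]

end OmegaExponent

open OmegaExponent

/-- For Lebesgue almost every `m × n` real matrix `Y`, the Diophantine exponent
`ω(Y)` equals `n/m`. -/
theorem ae_omega_eq (m n : ℕ) (hm : 0 < m) (hn : 0 < n) :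
    ∀ᵐ Y : Fin m → Fin n → ℝ, omegaSup m n (Matrix.of Y) = (n : ℝ) / m := by
  have hpos : 0 < (n : ℝ) / m := by positivity
  have hfin : ∀ᵐ Y : Fin m → Fin n → ℝ, ∀ k : ℕ,
      (approximants (of Y) (n / m + 1 / (k + 1))).Finite :=
    ae_all_iff.2 fun k => ae_approximants_finite hm (lt_add_of_pos_right _ (by positivity))
  filter_upwards [hfin] with Y hY
  refine csSup_eq_of_forall_le_of_forall_lt_exists_gt
    ⟨n / m / 2, half_pos hpos, approximants_infinite _ (half_pos hpos) (half_lt_self hpos)⟩ ?_ ?_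
  · rintro v ⟨-, hv⟩
    by_contra! hlt
    obtain ⟨k, hk⟩ := exists_nat_one_div_lt (sub_pos.2 hlt)
    exact hv ((hY k).subset (approximants_anti _ (by linarith)))
  · intro w hw
    obtain ⟨v, hwv, hv⟩ := exists_between (max_lt hw hpos)
    have hv0 : 0 < v := (le_max_right _ _).trans_lt hwv
    exact ⟨v, ⟨hv0, approximants_infinite _ hv0 hv⟩, (le_max_left _ _).trans_lt hwv⟩
end

section
/- (Good approximations to A yield singular subspaces) Let s < n, A' ∈ M_{s,n−s}(ℝ), a₀ ∈ ℝ^{n−s}, and set A = (a₀; A') ∈ M_{s+1,n−s}(ℝ). Parametrize the affine subspace L ⊂ ℝ^n by x ↦ (x, x A' + a₀) for x ∈ ℝ^s. If A is φ-singular (as an (s+1)×(n−s) system of linear forms), then every point of L is φ-singular (as a 1×n system of linear forms, i.e. a row vector in ℝ^n). -/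
/-! If `(p, q)` approximates `A`, then `Q = (-p₁, …, -pₛ, q)` and `p₀` approximate the point
`y = (x, x̃A)`, because `y ⬝ᵥ Q - p₀ = x̃ ⬝ᵥ (Aq - p)`. Replacing `p` by the rounding of `Aq` does not
increase the error and gives `‖p‖ ≤ ‖A‖ ‖q‖ + 1/2 ≤ (‖A‖ + 1) ‖q‖` (as `q` is a nonzero integer
vector), so `‖Q‖` is of the order of `‖q‖`. Finally, the exponent `1 / (s + r)` of the target is at
most the exponent `(s + 1) / r` of the hypothesis. -/

open Matrix

/-- `Y ∈ M_{m,n}(ℝ)` is `φ`-singular. -/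
def MatSingular (m n : ℕ) (φ : ℝ → ℝ) (Y : Matrix (Fin m) (Fin n) ℝ) : Prop :=
  ∀ c > (0 : ℝ), ∃ N₀ : ℝ, ∀ N ≥ N₀, ∃ q : Fin n → ℤ, q ≠ 0 ∧
    (∃ p : Fin m → ℤ,
      ‖Y.mulVec (fun j => (q j : ℝ)) - fun i => (p i : ℝ)‖ < c * φ N / N ^ ((m : ℝ) / n)) ∧
    ‖((fun j => (q j : ℝ)) : Fin n → ℝ)‖ < c * N

/-- A row vector `y ∈ ℝ^n`, viewed as a `1 × n` system of linear forms, is `φ`-singular. -/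
def VecSingular (n : ℕ) (φ : ℝ → ℝ) (y : Fin n → ℝ) : Prop :=
  ∀ c > (0 : ℝ), ∃ N₀ : ℝ, ∀ N ≥ N₀, ∃ q : Fin n → ℤ, q ≠ 0 ∧
    (∃ p : ℤ, |(∑ j, y j * q j) - p| < c * φ N / N ^ ((1 : ℝ) / n)) ∧
    ‖((fun j => (q j : ℝ)) : Fin n → ℝ)‖ < c * N

section

variable {ι : Type*} [Fintype ι]

lemma abs_dotProduct_le (u e : ι → ℝ) : |u ⬝ᵥ e| ≤ (∑ i, |u i|) * ‖e‖ := by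
  rw [Finset.sum_mul]
  refine (Finset.abs_sum_le_sum_abs _ _).trans (Finset.sum_le_sum fun i _ => ?_)
  rw [abs_mul]
  exact mul_le_mul_of_nonneg_left (by simpa using norm_le_pi_norm e i) (abs_nonneg _)

lemma one_le_norm_intCast_of_ne_zero {q : ι → ℤ} (hq : q ≠ 0) :
    1 ≤ ‖fun i => (q i : ℝ)‖ := by
  obtain ⟨i, hi⟩ := Function.ne_iff.1 hq
  calc (1 : ℝ) ≤ |(q i : ℝ)| := by exact_mod_cast Int.one_le_abs hi
    _ ≤ _ := by simpa using norm_le_pi_norm (fun i => (q i : ℝ)) i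

lemma norm_sub_round_le (v : ι → ℝ) (p : ι → ℤ) :
    ‖v - fun i => (round (v i) : ℝ)‖ ≤ ‖v - fun i => (p i : ℝ)‖ :=
  (pi_norm_le_iff_of_nonneg (norm_nonneg _)).2 fun i =>
    (round_le (v i) (p i)).trans (by simpa using norm_le_pi_norm (v - fun i => (p i : ℝ)) i)

lemma norm_round_le (v : ι → ℝ) : ‖fun i => (round (v i) : ℝ)‖ ≤ ‖v‖ + 1 / 2 := by
  refine (pi_norm_le_iff_of_nonneg (by positivity)).2 fun i => ?_
  have hround := abs_sub_round (v i)
  have htri := abs_sub_abs_le_abs_sub (round (v i) : ℝ) (v i)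
  have hvi : |v i| ≤ ‖v‖ := by simpa using norm_le_pi_norm v i
  rw [abs_sub_comm] at htri
  rw [Real.norm_eq_abs]
  linarith

end

lemma pos_of_lt_mul_div {t c a D : ℝ} (ht : 0 ≤ t) (hc : 0 < c) (hD : 0 < D)
    (h : t < c * a / D) : 0 < a :=
  pos_of_mul_pos_right ((div_pos_iff_of_pos_right hD).1 (ht.trans_lt h)) hc.le

theorem MatSingular.exists_bounded_numerator {m n : ℕ} {φ : ℝ → ℝ}
    {Y : Matrix (Fin m) (Fin n) ℝ} (hY : MatSingular m n φ Y) :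
    ∀ c > (0 : ℝ), ∃ N₀ : ℝ, ∀ N ≥ N₀, ∃ q : Fin n → ℤ, q ≠ 0 ∧ ∃ p : Fin m → ℤ,
      ‖Y *ᵥ (fun j => (q j : ℝ)) - fun i => (p i : ℝ)‖ < c * φ N / N ^ ((m : ℝ) / n) ∧
      ‖fun j => (q j : ℝ)‖ < c * N ∧ ‖fun i => (p i : ℝ)‖ < c * N := by
  intro c hc
  set C := ‖LinearMap.toContinuousLinearMap (Matrix.toLin' Y)‖
  have hC : ∀ w, ‖Y *ᵥ w‖ ≤ C * ‖w‖ := (LinearMap.toContinuousLinearMap (Matrix.toLin' Y)).le_opNorm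
  have hC1 : 0 < C + 1 := by positivity
  obtain ⟨N₀, hN₀⟩ := hY (c / (C + 1)) (by positivity)
  refine ⟨N₀, fun N hN => ?_⟩
  obtain ⟨q, hq, ⟨p, he⟩, hqN⟩ := hN₀ N hN
  set v := Y *ᵥ (fun j => (q j : ℝ))
  have hcK : c / (C + 1) ≤ c := div_le_self hc.le (by simp [C])
  have hN0 : 0 < N := pos_of_mul_pos_right ((norm_nonneg _).trans_lt hqN) (by positivity)
  have hφN : 0 < φ N :=
    pos_of_lt_mul_div (norm_nonneg _) (by positivity) (by positivity) he
  refine ⟨q, hq, fun i => round (v i), ?_, hqN.trans_le (by gcongr), ?_⟩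
  · calc ‖v - fun i => ((round (v i) : ℤ) : ℝ)‖ ≤ ‖v - fun i => (p i : ℝ)‖ := norm_sub_round_le v p
      _ < c / (C + 1) * φ N / N ^ ((m : ℝ) / n) := he
      _ ≤ c * φ N / N ^ ((m : ℝ) / n) := by gcongr
  · calc ‖fun i => ((round (v i) : ℤ) : ℝ)‖ ≤ ‖v‖ + 1 / 2 := norm_round_le v
      _ ≤ (C + 1) * ‖fun j => (q j : ℝ)‖ := by
        linarith [hC (fun j => (q j : ℝ)), one_le_norm_intCast_of_ne_zero hq]
      _ < (C + 1) * (c / (C + 1) * N) := by gcongr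
      _ = c * N := by field_simp

section

variable {s r : ℕ}

lemma append_dotProduct_sub {R : Type*} [CommRing R] (x : Fin s → R)
    (A : Matrix (Fin (s + 1)) (Fin r) R) (p : Fin (s + 1) → R) (q : Fin r → R) :
    Fin.append x (Fin.cons 1 x ᵥ* A) ⬝ᵥ Fin.append (-Fin.tail p) q - p 0
      = Fin.cons 1 x ⬝ᵥ (A *ᵥ q - p) := by
  rw [dotProduct_sub, dotProduct_mulVec]
  simp [dotProduct, Fin.sum_univ_add, Fin.sum_univ_succ, Fin.tail]
  ring

lemma intCast_append_neg_tail (p : Fin (s + 1) → ℤ) (q : Fin r → ℤ) :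
    (fun j => ((Fin.append (-Fin.tail p) q j : ℤ) : ℝ))
      = Fin.append (-Fin.tail fun i => (p i : ℝ)) (fun j => (q j : ℝ)) := by
  funext j
  induction j using Fin.addCases <;> simp [Fin.tail]

lemma abs_append_dotProduct_intCast_sub_le (x : Fin s → ℝ) (A : Matrix (Fin (s + 1)) (Fin r) ℝ)
    (p : Fin (s + 1) → ℤ) (q : Fin r → ℤ) :
    |∑ j, Fin.append x (Fin.cons 1 x ᵥ* A) j * ((Fin.append (-Fin.tail p) q j : ℤ) : ℝ) - p 0|
      ≤ (∑ i, |(Fin.cons 1 x : Fin (s + 1) → ℝ) i|) *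
        ‖A *ᵥ (fun j => (q j : ℝ)) - fun i => (p i : ℝ)‖ := by
  calc _ = |Fin.cons 1 x ⬝ᵥ (A *ᵥ (fun j => (q j : ℝ)) - fun i => (p i : ℝ))| := by
        rw [← append_dotProduct_sub, ← intCast_append_neg_tail]
        rfl
    _ ≤ _ := abs_dotProduct_le _ _

lemma norm_intCast_append_neg_tail_le (p : Fin (s + 1) → ℤ) (q : Fin r → ℤ) :
    ‖fun j => ((Fin.append (-Fin.tail p) q j : ℤ) : ℝ)‖
      ≤ max ‖fun i => (p i : ℝ)‖ ‖fun j => (q j : ℝ)‖ := by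
  refine (pi_norm_le_iff_of_nonneg (by positivity)).2 fun j => ?_
  induction j using Fin.addCases with
  | left i => simpa [Fin.tail] using le_max_of_le_left (norm_le_pi_norm (fun i => (p i : ℝ)) i.succ)
  | right j => simpa using le_max_of_le_right (norm_le_pi_norm (fun j => (q j : ℝ)) j)

lemma one_div_add_le_succ_div (hr : 0 < r) :
    (1 : ℝ) / ((s + r : ℕ) : ℝ) ≤ ((s + 1 : ℕ) : ℝ) / r := by
  have : (0 : ℝ) < r := by exact_mod_cast hr
  rw [div_le_div_iff₀ (by positivity) this]
  push_cast
  nlinarith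

end

theorem subspace_singular_of_matrix_singular_general (s r : ℕ)
    (φ : ℝ → ℝ)
    (A : Matrix (Fin (s + 1)) (Fin r) ℝ)
    (hA : MatSingular (s + 1) r φ A) :
    ∀ x : Fin s → ℝ,
      VecSingular (s + r) φ (Fin.append x ((Fin.cons 1 x) ᵥ* A)) := by
  intro x c hc
  set L := ∑ i, |(Fin.cons 1 x : Fin (s + 1) → ℝ) i|
  have hL : 1 ≤ L := by
    simpa using Finset.single_le_sum (f := fun i => |(Fin.cons 1 x : Fin (s + 1) → ℝ) i|)
      (fun i _ => abs_nonneg _) (Finset.mem_univ 0)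
  obtain ⟨N₀, hN₀⟩ := hA.exists_bounded_numerator (c / L) (by positivity)
  refine ⟨max N₀ 1, fun N hN => ?_⟩
  obtain ⟨q, hq, p, he, hqN, hpN⟩ := hN₀ N (le_of_max_le_left hN)
  have hN1 : 1 ≤ N := le_of_max_le_right hN
  have hr : 0 < r := (Function.ne_iff.1 hq).elim fun j _ => j.pos
  have hφN : 0 < φ N := pos_of_lt_mul_div (norm_nonneg _) (by positivity) (by positivity) he
  refine ⟨Fin.append (-Fin.tail p) q, fun h => hq (funext fun j => ?_), ⟨p 0, ?_⟩, ?_⟩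
  · simpa using congrFun h (Fin.natAdd s j)
  · calc _ ≤ L * ‖A *ᵥ (fun j => (q j : ℝ)) - fun i => (p i : ℝ)‖ :=
          abs_append_dotProduct_intCast_sub_le x A p q
      _ < L * (c / L * φ N / N ^ (((s + 1 : ℕ) : ℝ) / r)) := by gcongr
      _ = c * φ N / N ^ (((s + 1 : ℕ) : ℝ) / r) := by field_simp
      _ ≤ c * φ N / N ^ ((1 : ℝ) / ((s + r : ℕ) : ℝ)) :=
          div_le_div_of_nonneg_left (by positivity) (by positivity)
            (Real.rpow_le_rpow_of_exponent_le hN1 (one_div_add_le_succ_div hr))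
  · calc _ ≤ max ‖fun i => (p i : ℝ)‖ ‖fun j => (q j : ℝ)‖ := norm_intCast_append_neg_tail_le p q
      _ < c / L * N := max_lt hpN hqN
      _ ≤ c * N := by gcongr; exact div_le_self hc.le hL

/-- Good approximations to `A` yield singular subspaces: if `A = (a₀; A')` is
`φ`-singular as an `(s+1) × (n−s)` system, then every point `(x, x̃A)` of the affine
subspace `L` parametrized by `x ↦ (x, xA' + a₀)` is `φ`-singular as a row vector. -/
theorem subspace_singular_of_matrix_singular (s r : ℕ) (hr : 0 < r)
    (φ : ℝ → ℝ) (hφa : AntitoneOn φ (Set.Ioi 0)) (hφc : ContinuousOn φ (Set.Ioi 0))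
    (hφp : ∀ x > (0 : ℝ), 0 < φ x)
    (A : Matrix (Fin (s + 1)) (Fin r) ℝ)
    (hA : MatSingular (s + 1) r φ A) :
    ∀ x : Fin s → ℝ,
      VecSingular (s + r) φ (Fin.append x ((Fin.cons 1 x) ᵥ* A)) :=
  subspace_singular_of_matrix_singular_general s r φ A hA
end

section
/- (Good approximations to A give large Diophantine exponent on the subspace) Let L ⊂ ℝ^n be parametrized by x ↦ (x, x A' + a₀) with A = (a₀; A') ∈ M_{s+1,n−s}(ℝ). If dist(Aq, ℤ^{s+1}) < ‖q‖^{-v} for infinitely many q ∈ ℤ^{n−s}, then for every x ∈ ℝ^s and every v' < v there are infinitely many q' ∈ ℤ^n with dist(⟨(x, x̃A), q'⟩, ℤ) < ‖q'‖^{-v'}. -/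
open Matrix

/-- Good approximations to `A` give large Diophantine exponent on the affine subspace:
if `dist(Aq, ℤ^{s+1}) < ‖q‖^{-v}` for infinitely many `q ∈ ℤ^{n-s}`, then for every
`x ∈ ℝ^s` and `v' < v` there are infinitely many `q' ∈ ℤ^n` with
`dist(⟨(x, x̃A), q'⟩, ℤ) < ‖q'‖^{-v'}`; thus `ω((x, x̃A)) ≥ ω(A)`. -/
theorem subspace_exponent_ge (s r : ℕ) (hr : 0 < r) (v : ℝ) (hv : 0 < v)
    (A : Matrix (Fin (s + 1)) (Fin r) ℝ)
    (hA : {q : Fin r → ℤ | q ≠ 0 ∧ ∃ p : Fin (s + 1) → ℤ,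
        ‖A.mulVec (fun j => (q j : ℝ)) - fun i => (p i : ℝ)‖ <
          ‖((fun j => (q j : ℝ)) : Fin r → ℝ)‖ ^ (-v)}.Infinite) :
    ∀ x : Fin s → ℝ, ∀ v' : ℝ, 0 < v' → v' < v →
      {q' : Fin (s + r) → ℤ | q' ≠ 0 ∧ ∃ p : ℤ,
        |(∑ j, Fin.append x ((Fin.cons 1 x) ᵥ* A) j * q' j) - p| <
          ‖((fun j => (q' j : ℝ)) : Fin (s + r) → ℝ)‖ ^ (-v')}.Infinite := by
  intro x v' hv' hv'v
  classical
  set xt : Fin (s+1) → ℝ := Fin.cons 1 x with hxt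
  -- key algebraic identity
  have key : ∀ (q : Fin r → ℤ) (p : Fin (s+1) → ℤ),
      (∑ j, Fin.append x (xt ᵥ* A) j * ((Fin.append (fun i => -(p i.succ)) q) j : ℝ))
        - (p 0 : ℝ)
      = ∑ i, xt i * (A.mulVec (fun j => (q j : ℝ)) i - (p i : ℝ)) := by
    intro q p
    have h1 : (∑ j, Fin.append x (xt ᵥ* A) j * ((Fin.append (fun i => -(p i.succ)) q) j : ℝ))
        = ∑ i : Fin s, x i * (-(p i.succ) : ℤ) + ∑ j : Fin r, (xt ᵥ* A) j * (q j : ℝ) := by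
      rw [Fin.sum_univ_add]
      simp [Fin.append_left, Fin.append_right]
    have h2 : ∑ j : Fin r, (xt ᵥ* A) j * (q j : ℝ)
        = ∑ i : Fin (s+1), xt i * A.mulVec (fun j => (q j : ℝ)) i := by
      simp only [vecMul, dotProduct, mulVec, Finset.sum_mul, Finset.mul_sum]
      rw [Finset.sum_comm]
      simp [mul_assoc]
    have h3 : ∑ i : Fin (s+1), xt i * (p i : ℝ)
        = (p 0 : ℝ) + ∑ i : Fin s, x i * (p i.succ : ℝ) := by
      rw [Fin.sum_univ_succ]
      simp [hxt]
    simp only [mul_sub, Finset.sum_sub_distrib]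
    rw [h1, h2, h3]
    push_cast
    simp only [mul_neg, Finset.sum_neg_distrib]
    ring
  -- xt has norm ≥ 1
  have hxt1 : 1 ≤ ‖xt‖ := by
    have := norm_le_pi_norm xt 0
    simpa [hxt] using this
  -- bound |∑ xt i * w i| ≤ C ‖w‖
  set C : ℝ := (s+1) * ‖xt‖ with hC
  have hCpos : 0 < C := by positivity
  have habs : ∀ w : Fin (s+1) → ℝ, |∑ i, xt i * w i| ≤ C * ‖w‖ := by
    intro w
    calc |∑ i, xt i * w i| ≤ ∑ i, |xt i * w i| := Finset.abs_sum_le_sum_abs _ _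
      _ ≤ ∑ _i : Fin (s+1), ‖xt‖ * ‖w‖ := by
          refine Finset.sum_le_sum fun i _ => ?_
          rw [abs_mul]
          exact mul_le_mul (norm_le_pi_norm xt i) (norm_le_pi_norm w i) (abs_nonneg _)
            (norm_nonneg _)
      _ = C * ‖w‖ := by simp [hC]; ring
  -- constants for q' norm bound
  set B : ℝ := ∑ i, ∑ j, |A i j| with hB
  have hBnn : 0 ≤ B := Finset.sum_nonneg fun i _ => Finset.sum_nonneg fun j _ => abs_nonneg _
  set K : ℝ := B + 2 with hKdef
  have hK1 : 1 ≤ K := by simp [hKdef]; linarith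
  have hKpos : 0 < K := lt_of_lt_of_le one_pos hK1
  -- nonzero integer vectors have norm ≥ 1
  have hnorm1 : ∀ {k : ℕ} (m : Fin k → ℤ), m ≠ 0 → 1 ≤ ‖((fun j => (m j : ℝ)) : Fin k → ℝ)‖ := by
    intro k m hm
    obtain ⟨j, hj⟩ := Function.ne_iff.mp hm
    calc (1:ℝ) ≤ |(m j : ℝ)| := by
          rw [← Int.cast_abs]
          exact_mod_cast Int.one_le_abs (by simpa using hj)
      _ ≤ ‖((fun j => (m j : ℝ)) : Fin k → ℝ)‖ := by
          simpa using norm_le_pi_norm (fun j => ((m j : ℝ))) j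
  -- threshold
  obtain ⟨T, hT1, hT⟩ : ∃ T : ℝ, 1 ≤ T ∧ ∀ t : ℝ, T ≤ t → C * K ^ v' * t ^ (v' - v) < 1 := by
    have hlim : Filter.Tendsto (fun t : ℝ => C * K ^ v' * t ^ (v' - v)) Filter.atTop
        (nhds (C * K ^ v' * 0)) := by
      refine Filter.Tendsto.const_mul _ ?_
      have := tendsto_rpow_neg_atTop (y := v - v') (by linarith)
      simpa [neg_sub] using this
    rw [mul_zero] at hlim
    have := (hlim.eventually_lt_const one_pos).exists_forall_of_atTop
    obtain ⟨T₀, hT₀⟩ := this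
    exact ⟨max T₀ 1, le_max_right _ _, fun t ht => hT₀ t (le_trans (le_max_left _ _) ht)⟩
  -- choice of p
  set P : (Fin r → ℤ) → (Fin (s+1) → ℤ) := fun q =>
    if h : ∃ p : Fin (s + 1) → ℤ,
        ‖A.mulVec (fun j => (q j : ℝ)) - fun i => (p i : ℝ)‖ <
          ‖((fun j => (q j : ℝ)) : Fin r → ℝ)‖ ^ (-v) then h.choose else 0 with hP
  set f : (Fin r → ℤ) → (Fin (s+r) → ℤ) := fun q =>
    Fin.append (fun i => -(P q i.succ)) q with hf
  have hfinj : Function.Injective f := by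
    intro a b hab
    funext j
    have := congrFun hab (Fin.natAdd s j)
    simpa [hf, Fin.append_right] using this
  -- the low-norm set is finite
  have hfin : {q : Fin r → ℤ | ‖((fun j => (q j : ℝ)) : Fin r → ℝ)‖ < T}.Finite := by
    have hsub : {q : Fin r → ℤ | ‖((fun j => (q j : ℝ)) : Fin r → ℝ)‖ < T}
        ⊆ Set.pi Set.univ fun _ : Fin r => Set.Icc (-⌈T⌉) ⌈T⌉ := by
      intro q hq j _
      have h1 : |(q j : ℝ)| ≤ T := by
        have hb : |(q j : ℝ)| ≤ ‖((fun j => (q j : ℝ)) : Fin r → ℝ)‖ := by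
          simpa using norm_le_pi_norm (fun j => ((q j : ℝ))) j
        exact le_of_lt (lt_of_le_of_lt hb hq)
      have h2 : |q j| ≤ ⌈T⌉ := by
        have hc : ((|q j| : ℤ) : ℝ) ≤ ((⌈T⌉ : ℤ) : ℝ) := by
          rw [Int.cast_abs]
          exact le_trans h1 (Int.le_ceil T)
        exact_mod_cast hc
      exact Set.mem_Icc.mpr (abs_le.mp h2)
    exact (Set.Finite.pi fun _ => Set.finite_Icc _ _).subset hsub
  set S' := {q : Fin r → ℤ | q ≠ 0 ∧ ∃ p : Fin (s + 1) → ℤ,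
      ‖A.mulVec (fun j => (q j : ℝ)) - fun i => (p i : ℝ)‖ <
        ‖((fun j => (q j : ℝ)) : Fin r → ℝ)‖ ^ (-v)}
      \ {q : Fin r → ℤ | ‖((fun j => (q j : ℝ)) : Fin r → ℝ)‖ < T} with hS'
  have hS'inf : S'.Infinite := hA.diff hfin
  refine Set.Infinite.mono ?_ (hS'inf.image (hfinj.injOn))
  rintro _ ⟨q, hq, rfl⟩
  obtain ⟨⟨hq0, hex⟩, hqT⟩ := hq
  simp only [Set.mem_setOf_eq, not_lt] at hqT
  set t : ℝ := ‖((fun j => (q j : ℝ)) : Fin r → ℝ)‖ with ht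
  have ht1 : 1 ≤ t := le_trans hT1 hqT
  have htpos : 0 < t := lt_of_lt_of_le one_pos ht1
  set p : Fin (s+1) → ℤ := P q with hpdef
  have hpprop : ‖A.mulVec (fun j => (q j : ℝ)) - fun i => (p i : ℝ)‖ < t ^ (-v) := by
    simp only [hpdef, hP]
    rw [dif_pos hex]
    exact hex.choose_spec
  -- bound on |p i|
  have hpbound : ∀ i, |(p i : ℝ)| ≤ K * t := by
    intro i
    have h1 : |A.mulVec (fun j => (q j : ℝ)) i - (p i : ℝ)| ≤ t ^ (-v) := by
      have := norm_le_pi_norm (A.mulVec (fun j => (q j : ℝ)) - fun i => (p i : ℝ)) i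
      simp only [Pi.sub_apply, Real.norm_eq_abs] at this
      exact le_of_lt (lt_of_le_of_lt this hpprop)
    have h2 : t ^ (-v) ≤ 1 := Real.rpow_le_one_of_one_le_of_nonpos ht1 (by linarith)
    have h3 : |A.mulVec (fun j => (q j : ℝ)) i| ≤ B * t := by
      calc |A.mulVec (fun j => (q j : ℝ)) i| = |∑ j, A i j * (q j : ℝ)| := by
            simp [mulVec, dotProduct]
        _ ≤ ∑ j, |A i j * (q j : ℝ)| := Finset.abs_sum_le_sum_abs _ _
        _ ≤ ∑ j, |A i j| * t := by
            refine Finset.sum_le_sum fun j _ => ?_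
            rw [abs_mul]
            refine mul_le_mul_of_nonneg_left ?_ (abs_nonneg _)
            simpa [ht] using norm_le_pi_norm (fun j => ((q j : ℝ))) j
        _ = (∑ j, |A i j|) * t := by rw [Finset.sum_mul]
        _ ≤ B * t := by
            refine mul_le_mul_of_nonneg_right ?_ (le_of_lt htpos)
            exact Finset.single_le_sum (f := fun i => ∑ j, |A i j|)
              (fun i _ => Finset.sum_nonneg fun j _ => abs_nonneg _) (Finset.mem_univ i)
    calc |(p i : ℝ)| ≤ |A.mulVec (fun j => (q j : ℝ)) i - (p i : ℝ)|
          + |A.mulVec (fun j => (q j : ℝ)) i| := by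
          have h4 := abs_sub (A.mulVec (fun j => (q j : ℝ)) i - (p i : ℝ))
            (A.mulVec (fun j => (q j : ℝ)) i)
          have h5 : |A.mulVec (fun j => (q j : ℝ)) i - (p i : ℝ)
              - A.mulVec (fun j => (q j : ℝ)) i| = |(p i : ℝ)| := by
            rw [show A.mulVec (fun j => (q j : ℝ)) i - (p i : ℝ)
              - A.mulVec (fun j => (q j : ℝ)) i = -(p i : ℝ) by ring, abs_neg]
          rw [h5] at h4
          exact h4
      _ ≤ t ^ (-v) + B * t := add_le_add h1 h3
      _ ≤ 1 + B * t := by linarith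
      _ ≤ K * t := by
          have : (1:ℝ) ≤ t := ht1
          calc (1:ℝ) + B * t ≤ t + B * t := by linarith
            _ = (B + 1) * t := by ring
            _ ≤ K * t := mul_le_mul_of_nonneg_right (by rw [hKdef]; linarith)
                (le_of_lt htpos)
  -- set q'
  set q' : Fin (s+r) → ℤ := f q with hq'
  have hq'0 : q' ≠ 0 := by
    intro h0
    apply hq0
    funext j
    have := congrFun h0 (Fin.natAdd s j)
    simpa [hq', hf, Fin.append_right] using this
  set t' : ℝ := ‖((fun j => (q' j : ℝ)) : Fin (s+r) → ℝ)‖ with ht'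
  have ht'1 : 1 ≤ t' := hnorm1 q' hq'0
  have ht'pos : 0 < t' := lt_of_lt_of_le one_pos ht'1
  -- bound t' ≤ K * t
  have ht'le : t' ≤ K * t := by
    rw [ht']
    refine pi_norm_le_iff_of_nonneg (by positivity) |>.mpr fun j => ?_
    refine Fin.addCases (motive := fun j => ‖((q' j : ℝ))‖ ≤ K * t) ?_ ?_ j
    · intro i
      have : q' (Fin.castAdd r i) = -(p i.succ) := by simp [hq', hf, Fin.append_left, hpdef]
      rw [this]
      simpa using hpbound i.succ
    · intro i
      have : q' (Fin.natAdd s i) = q i := by simp [hq', hf, Fin.append_right]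
      rw [this]
      calc ‖((q i : ℝ))‖ ≤ t := by simpa [ht] using norm_le_pi_norm (fun j => ((q j : ℝ))) i
        _ = 1 * t := (one_mul t).symm
        _ ≤ K * t := mul_le_mul_of_nonneg_right hK1 (le_of_lt htpos)
  -- main estimate
  refine ⟨hq'0, p 0, ?_⟩
  have hkey := key q p
  have hsum : (∑ j, Fin.append x (xt ᵥ* A) j * (q' j : ℝ)) - (p 0 : ℝ)
      = ∑ i, xt i * (A.mulVec (fun j => (q j : ℝ)) i - (p i : ℝ)) := by
    rw [← hkey]
  calc |(∑ j, Fin.append x (xt ᵥ* A) j * (q' j : ℝ)) - (p 0 : ℝ)|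
      = |∑ i, xt i * (A.mulVec (fun j => (q j : ℝ)) i - (p i : ℝ))| := by rw [hsum]
    _ ≤ C * ‖(A.mulVec (fun j => (q j : ℝ)) - fun i => (p i : ℝ))‖ := by
        have := habs (A.mulVec (fun j => (q j : ℝ)) - fun i => (p i : ℝ))
        simpa using this
    _ < C * t ^ (-v) := by
        exact mul_lt_mul_of_pos_left hpprop hCpos
    _ ≤ K ^ (-v') * t ^ (-v') := by
        have h1 : C * t ^ (v' - v) < K ^ (-v') := by
          have h2 := hT t hqT
          have hb : (0:ℝ) < K ^ v' := Real.rpow_pos_of_pos hKpos _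
          have h2' : C * t ^ (v' - v) * K ^ v' < 1 := by
            calc C * t ^ (v' - v) * K ^ v' = C * K ^ v' * t ^ (v' - v) := by ring
              _ < 1 := h2
          rw [Real.rpow_neg (le_of_lt hKpos)]
          calc C * t ^ (v' - v) = C * t ^ (v' - v) * K ^ v' * (K ^ v')⁻¹ := by
                field_simp
            _ < 1 * (K ^ v')⁻¹ := by
                exact mul_lt_mul_of_pos_right h2' (inv_pos.mpr hb)
            _ = (K ^ v')⁻¹ := one_mul _
        have h3 : t ^ (-v) = t ^ (v' - v) * t ^ (-v') := by
          rw [← Real.rpow_add htpos]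
          ring_nf
        rw [h3, ← mul_assoc]
        exact mul_le_mul_of_nonneg_right (le_of_lt h1) (Real.rpow_nonneg (le_of_lt htpos) _)
    _ = (K * t) ^ (-v') := (Real.mul_rpow (le_of_lt hKpos) (le_of_lt htpos)).symm
    _ ≤ t' ^ (-v') := Real.rpow_le_rpow_of_nonpos ht'pos ht'le (by linarith)
end

section
/- (Diagonal embedding does not increase the Diophantine exponent) Let f₁,…,f_n be real numbers and x ∈ ℝ, and define the 1×n row vector y = (f₁,…,f_n). For m ∈ ℕ, consider the m×mn matrix F = (f₁ I_m, f₂ I_m, …, f_n I_m). Then ω(F) ≤ ω(y), that is, if there exists w > 0 with dist(Fq, ℤ^m) < ‖q‖^{-w} for infinitely many q ∈ ℤ^{mn}, then dist(Σᵢ fᵢ rᵢ, ℤ) < ‖r‖^{-w} for infinitely many r ∈ ℤ^n. -/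
/-- Diagonal embedding does not increase the Diophantine exponent: for
`F = (f₁ I_m, …, f_n I_m) ∈ M_{m,mn}` (integer vectors `q` indexed as blocks
`q = (q₁,…,q_n)`, `qᵢ ∈ ℤ^m`), if there are infinitely many `q` with
`dist(Fq, ℤ^m) < ‖q‖^{-w}`, then there are infinitely many `r ∈ ℤ^n` with
`dist(Σᵢ fᵢ rᵢ, ℤ) < ‖r‖^{-w}` (supremum norms). -/
theorem diag_embedding_exponent (m n : ℕ) (hm : 0 < m) (hn : 0 < n)
    (f : Fin n → ℝ) (w : ℝ) (hw : 0 < w)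
    (h : {q : Fin n → Fin m → ℤ | q ≠ 0 ∧ ∃ p : Fin m → ℤ,
        ‖((fun j => (∑ i, f i * (q i j : ℝ)) - (p j : ℝ)) : Fin m → ℝ)‖ <
          ‖((fun i j => (q i j : ℝ)) : Fin n → Fin m → ℝ)‖ ^ (-w)}.Infinite) :
    {r : Fin n → ℤ | r ≠ 0 ∧ ∃ p : ℤ,
      |(∑ i, f i * r i) - p| <
        ‖((fun i => (r i : ℝ)) : Fin n → ℝ)‖ ^ (-w)}.Infinite := by
  classical
  by_contra hinf
  rw [Set.not_infinite] at hinf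
  obtain ⟨C, hCmem⟩ : ∃ C : ℕ, ∀ r ∈ {r : Fin n → ℤ | r ≠ 0 ∧ ∃ p : ℤ,
      |(∑ i, f i * r i) - p| < ‖((fun i => (r i : ℝ)) : Fin n → ℝ)‖ ^ (-w)},
      ∀ i, (r i).natAbs ≤ C := by
    refine ⟨hinf.toFinset.sup (fun r => Finset.univ.sup fun i => (r i).natAbs), ?_⟩
    intro r hr i
    calc (r i).natAbs ≤ Finset.univ.sup (fun i => (r i).natAbs) :=
          Finset.le_sup (f := fun i => (r i).natAbs) (Finset.mem_univ i)
      _ ≤ _ := Finset.le_sup (f := fun r => Finset.univ.sup fun i => (r i).natAbs)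
          (hinf.mem_toFinset.mpr hr)
  have hBfin : ({q : Fin n → Fin m → ℤ | ∀ i j, (q i j).natAbs ≤ C}).Finite := by
    have hsub : ({q : Fin n → Fin m → ℤ | ∀ i j, (q i j).natAbs ≤ C}) ⊆
        Set.pi Set.univ (fun _ => Set.pi Set.univ (fun _ => Set.Icc (-(C : ℤ)) (C : ℤ))) := by
      intro q hq i _ j _
      simp only [Set.mem_Icc]
      have := hq i j
      omega
    exact (Set.Finite.pi (fun _ => Set.Finite.pi fun _ => Set.finite_Icc _ _)).subset hsub
  obtain ⟨q, hqS, hqB⟩ := (h.diff hBfin).nonempty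
  simp only [Set.mem_setOf_eq] at hqS hqB
  push_neg at hqB
  obtain ⟨i1, j1, hqlarge⟩ := hqB
  obtain ⟨hq0, p, hqnorm⟩ := hqS
  have hrT : (fun i => q i j1) ∈ {r : Fin n → ℤ | r ≠ 0 ∧ ∃ p : ℤ,
      |(∑ i, f i * r i) - p| < ‖((fun i => (r i : ℝ)) : Fin n → ℝ)‖ ^ (-w)} := by
    constructor
    · intro h0
      have h0' : q i1 j1 = 0 := congrFun h0 i1
      omega
    · refine ⟨p j1, ?_⟩
      have h1 : |(∑ i, f i * (q i j1 : ℝ)) - (p j1 : ℝ)| ≤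
          ‖((fun j => (∑ i, f i * (q i j : ℝ)) - (p j : ℝ)) : Fin m → ℝ)‖ := by
        simpa [Real.norm_eq_abs] using
          norm_le_pi_norm ((fun j => (∑ i, f i * (q i j : ℝ)) - (p j : ℝ)) : Fin m → ℝ) j1
      have h2 : ‖((fun i => (q i j1 : ℝ)) : Fin n → ℝ)‖ ≤
          ‖((fun i j => (q i j : ℝ)) : Fin n → Fin m → ℝ)‖ := by
        rw [pi_norm_le_iff_of_nonneg (norm_nonneg _)]
        intro i
        calc ‖((q i j1 : ℝ))‖ = ‖((fun j => (q i j : ℝ)) : Fin m → ℝ) j1‖ := rfl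
          _ ≤ ‖((fun j => (q i j : ℝ)) : Fin m → ℝ)‖ :=
              norm_le_pi_norm ((fun j => (q i j : ℝ)) : Fin m → ℝ) j1
          _ ≤ _ := norm_le_pi_norm ((fun i j => (q i j : ℝ)) : Fin n → Fin m → ℝ) i
      have hrpos : (0 : ℝ) < ‖((fun i => (q i j1 : ℝ)) : Fin n → ℝ)‖ := by
        have h3 : (C : ℝ) < |((q i1 j1 : ℝ))| := by
          rw [← Int.cast_abs]
          have : (C : ℤ) < |q i1 j1| := by
            rw [Int.abs_eq_natAbs]
            exact_mod_cast hqlarge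
          exact_mod_cast this
        calc (0 : ℝ) ≤ (C : ℝ) := Nat.cast_nonneg C
          _ < |((q i1 j1 : ℝ))| := h3
          _ ≤ _ := by
            simpa [Real.norm_eq_abs] using
              norm_le_pi_norm ((fun i => (q i j1 : ℝ)) : Fin n → ℝ) i1
      calc |(∑ i, f i * (q i j1 : ℝ)) - (p j1 : ℝ)|
          ≤ ‖((fun j => (∑ i, f i * (q i j : ℝ)) - (p j : ℝ)) : Fin m → ℝ)‖ := h1
        _ < ‖((fun i j => (q i j : ℝ)) : Fin n → Fin m → ℝ)‖ ^ (-w) := hqnorm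
        _ ≤ ‖((fun i => (q i j1 : ℝ)) : Fin n → ℝ)‖ ^ (-w) :=
            Real.rpow_le_rpow_of_nonpos hrpos h2 (neg_nonpos.mpr hw.le)
  have h5 : (q i1 j1).natAbs ≤ C := hCmem _ hrT i1
  omega
end
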